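/- arXiv:1906.09465 — 2 statements merged into one kernel-verified Lean document; each statement's English description precedes it below -/
import Mathlib

section
/- Let f : F^n → F be in layered canalizing form with r layers of sizes k_1, …, k_r and canalizing input sets S_{i,j}, and let x_s be the s-th variable of the ℓ-th layer (1 ≤ ℓ ≤ r) with canalizing input set S_{ℓ,s} satisfying 0 ∈ S_{ℓ,s}. Then the number of transitions changed by deleting x_s satisfies #{x ∈ F^n : f(x_1, …, x_{s−1}, 0, x_{s+1}, …, x_n) ≠ f(x)} ≤ p^{n − (k_1 + ⋯ + k_ℓ)} · (∏_{i=1}^{ℓ−1} ∏_{j=1}^{k_i} (p − |S_{i,j}|)) · (∏_{j=1, j ≠ s}^{k_ℓ} (p − |S_{ℓ,j}|)) · (p − |S_{ℓ,s}|). -/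
/-! If deleting `x_s` (a variable of layer `ℓ` with `0 ∈ S_s`) changes `f` at `x`, then no
variable `v` of the layers `1, …, ℓ` can take a canalizing value `x_v ∈ S_v`: otherwise the
factor `M_i` of its layer vanishes both at `x` and at the updated point (for `i = ℓ` because
`0 ∈ S_s`), the outer factors `M_j`, `j < i`, do not see `x_s`, and the nested form collapses to
the same value `M_1(⋯(M_{i-1} · B_i + B_{i-1})⋯) + B_1` at both points. Counting the points with
`x_v ∉ S_v` on these layers and arbitrary coordinates elsewhere gives the bound. -/

open Finset

/-- Indicator function of the complement of `S`: `Qt S x = 1` if `x ∉ S`, `0` if `x ∈ S`. -/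
def Qt {F : Type*} [Fintype F] [DecidableEq F] [Zero F] [One F] (S : Finset F) (x : F) : F :=
  if x ∈ S then 0 else 1

/-- `g` actually depends on (is essential in) its `i`-th variable. -/
def DependsOnVar {F : Type*} (n : ℕ) (g : (Fin n → F) → F) (i : Fin n) : Prop :=
  ∃ x y : Fin n → F, (∀ j, j ≠ i → x j = y j) ∧ g x ≠ g y

/-- `g` is canalizing in its `i`-th variable with canalizing input set `S`
(a nonempty proper subset of `F`) and canalizing output `b`. -/
def Canalizing {F : Type*} [Fintype F] [DecidableEq F] (n : ℕ) (g : (Fin n → F) → F)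
    (i : Fin n) (S : Finset F) (b : F) : Prop :=
  S.Nonempty ∧ S ≠ Finset.univ ∧ ∀ x : Fin n → F, x i ∈ S → g x = b

/-- `f` is 1-canalizing in its `i`-th variable with canalizing input set `S`
(a nonempty proper subset of `F`) and canalizing output `b`: `f = b` whenever `x i ∈ S`,
and on `x i ∉ S` the value of `f` is given by a single function of the remaining variables
which is not identically `b`. -/
def OneCanalizing {F : Type*} [Fintype F] [DecidableEq F] (n : ℕ) (f : (Fin n → F) → F)
    (i : Fin n) (S : Finset F) (b : F) : Prop :=
  S.Nonempty ∧ S ≠ Finset.univ ∧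
  (∀ x : Fin n → F, x i ∈ S → f x = b) ∧
  (∀ x y : Fin n → F, x i ∉ S → y i ∉ S → (∀ j, j ≠ i → x j = y j) → f x = f y) ∧
  (∃ x : Fin n → F, x i ∉ S ∧ f x ≠ b)

/-- Nested evaluation `M₁(M₂(⋯(M_r · P + B_r)⋯) + B₂) + B₁`. -/
def nestEval {F : Type*} [Mul F] [Add F] : List (F × F) → F → F
  | [], P => P
  | (m, b) :: t, P => m * nestEval t P + b

/-- Layered canalizing form data for a function of `n` variables with `r ≥ 1` layers:
pairwise disjoint layer blocks, nonempty proper canalizing input sets for the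
layer variables, layer constants `B` with the last one nonzero, and a core function
`P_C` of the remaining variables having no 1-canalizing variables. -/
structure LayeredForm (F : Type*) [Field F] [Fintype F] [DecidableEq F] (n r : ℕ) where
  hr : 0 < r
  layer : Fin r → Finset (Fin n)
  disj : ∀ i j : Fin r, i ≠ j → Disjoint (layer i) (layer j)
  S : Fin n → Finset F
  Sne : ∀ i : Fin r, ∀ v ∈ layer i, (S v).Nonempty
  Spr : ∀ i : Fin r, ∀ v ∈ layer i, S v ≠ Finset.univ
  B : Fin r → F
  Blast : B ⟨r - 1, Nat.sub_lt hr Nat.one_pos⟩ ≠ 0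
  PC : (Fin n → F) → F
  PCvars : ∀ i : Fin r, ∀ v ∈ layer i, ¬ DependsOnVar n PC v
  PCnc : ¬ ∃ (v : Fin n) (S' : Finset F) (b : F), OneCanalizing n PC v S' b

/-- The product `M_i = ∏_{v ∈ L_i} Q̃_{S_v}(x_v)` over the `i`-th layer. -/
def LayeredForm.M {F : Type*} [Field F] [Fintype F] [DecidableEq F] {n r : ℕ}
    (L : LayeredForm F n r) (i : Fin r) (x : Fin n → F) : F :=
  ∏ v ∈ L.layer i, Qt (L.S v) (x v)

/-- The function determined by a layered canalizing form:
`f(x) = M₁(M₂(⋯(M_r · P_C + B_r)⋯) + B₂) + B₁`. -/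
def LayeredForm.eval {F : Type*} [Field F] [Fintype F] [DecidableEq F] {n r : ℕ}
    (L : LayeredForm F n r) (x : Fin n → F) : F :=
  nestEval (List.ofFn fun i => (L.M i x, L.B i)) (L.PC x)

/-- The number of state-space transitions changed when the input `s` of `f`
is replaced by the constant `a` (edge deletion when `a = 0`). -/
def chCount {F : Type*} [Fintype F] [DecidableEq F] {n : ℕ}
    (f : (Fin n → F) → F) (s : Fin n) (a : F) : ℕ :=
  (Finset.univ.filter fun x : Fin n → F => f (Function.update x s a) ≠ f x).card

theorem nestEval_append {F : Type*} [Mul F] [Add F] (l₁ l₂ : List (F × F)) (P : F) :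
    nestEval (l₁ ++ l₂) P = nestEval l₁ (nestEval l₂ P) := by
  induction l₁ with
  | nil => rfl
  | cons a l ih => simp only [List.cons_append, nestEval, ih]

theorem nestEval_eq_of_getElem?_eq_zero {F : Type*} [NonUnitalNonAssocSemiring F]
    {l : List (F × F)} {i : ℕ} {b : F} (hi : l[i]? = some (0, b)) (P : F) :
    nestEval l P = nestEval (l.take i) b := by
  obtain ⟨hlt, hget⟩ := List.getElem?_eq_some_iff.mp hi
  conv_lhs => rw [← List.take_append_drop i l]
  rw [nestEval_append, List.drop_eq_getElem_cons hlt, hget]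
  simp [nestEval]

theorem card_piFinset_ite_mem {ι α : Type*} [Fintype ι] [DecidableEq ι] [Fintype α]
    (D : Finset ι) (T : ι → Finset α) :
    (Fintype.piFinset fun v => if v ∈ D then T v else univ).card =
      Fintype.card α ^ (Fintype.card ι - D.card) * ∏ v ∈ D, (T v).card := by
  have hD : ∏ v ∈ D, (if v ∈ D then T v else univ).card = ∏ v ∈ D, (T v).card :=
    prod_congr rfl fun v hv => by rw [if_pos hv]
  have hDc : ∏ v ∈ Dᶜ, (if v ∈ D then T v else univ).card =
      Fintype.card α ^ (Fintype.card ι - D.card) := by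
    rw [prod_congr rfl fun v hv => by rw [if_neg (mem_compl.mp hv), card_univ], prod_const,
      card_compl]
  rw [Fintype.card_piFinset, ← prod_mul_prod_compl D, hD, hDc, mul_comm]

namespace LayeredForm

variable {F : Type*} [Field F] [Fintype F] [DecidableEq F] {n r : ℕ} (L : LayeredForm F n r)

def layersUpTo (ℓ : Fin r) : Finset (Fin n) :=
  (univ.filter fun i : Fin r => i ≤ ℓ).biUnion L.layer

theorem pairwiseDisjoint_layer (I : Finset (Fin r)) : (I : Set (Fin r)).PairwiseDisjoint L.layer :=
  fun i _ j _ hij => L.disj i j hij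

theorem card_layersUpTo (ℓ : Fin r) :
    (L.layersUpTo ℓ).card = ∑ i ∈ univ.filter (fun i : Fin r => i ≤ ℓ), (L.layer i).card :=
  card_biUnion (L.pairwiseDisjoint_layer _)

theorem prod_layersUpTo {M : Type*} [CommMonoid M] (g : Fin n → M) {ℓ : Fin r} {s : Fin n}
    (hs : s ∈ L.layer ℓ) :
    ∏ v ∈ L.layersUpTo ℓ, g v =
      (∏ i ∈ univ.filter (fun i : Fin r => i < ℓ), ∏ v ∈ L.layer i, g v) *
        (∏ v ∈ (L.layer ℓ).erase s, g v) * g s := by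
  have hsplit : univ.filter (fun i : Fin r => i ≤ ℓ) =
      insert ℓ (univ.filter fun i : Fin r => i < ℓ) := by
    ext i
    simp [le_iff_lt_or_eq, or_comm]
  rw [layersUpTo, prod_biUnion (L.pairwiseDisjoint_layer _), hsplit,
    prod_insert (by simp), ← mul_prod_erase _ _ hs]
  ac_rfl

theorem M_eq_zero_of_mem {i : Fin r} {v : Fin n} (hv : v ∈ L.layer i) {x : Fin n → F}
    (hxv : x v ∈ L.S v) : L.M i x = 0 :=
  prod_eq_zero hv (if_pos hxv)

theorem M_update_of_ne {ℓ j : Fin r} {s : Fin n} (hs : s ∈ L.layer ℓ) (hj : j ≠ ℓ)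
    (x : Fin n → F) (a : F) : L.M j (Function.update x s a) = L.M j x :=
  prod_congr rfl fun w hw => by
    rw [Function.update_of_ne]
    rintro rfl
    exact disjoint_left.mp (L.disj j ℓ hj) hw hs

theorem eval_eq_of_M_eq_zero {x y : Fin n → F} (i : Fin r) (hx : L.M i x = 0)
    (hy : L.M i y = 0) (hlt : ∀ j < i, L.M j x = L.M j y) : L.eval x = L.eval y := by
  have hget : ∀ z, L.M i z = 0 →
      (List.ofFn fun j => (L.M j z, L.B j))[(i : ℕ)]? = some (0, L.B i) :=
    fun z hz => by simp [hz]
  rw [eval, eval, nestEval_eq_of_getElem?_eq_zero (hget x hx),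
    nestEval_eq_of_getElem?_eq_zero (hget y hy)]
  congr 1
  refine List.ext_getElem? fun j => ?_
  simp only [List.getElem?_take, List.getElem?_ofFn]
  split_ifs with hji hjr
  · rw [hlt ⟨j, hjr⟩ hji]
  all_goals rfl

theorem eval_update_eq_of_mem {ℓ i : Fin r} {s v : Fin n} {a : F} (hs : s ∈ L.layer ℓ)
    (ha : a ∈ L.S s) (hi : i ≤ ℓ) (hv : v ∈ L.layer i) {x : Fin n → F} (hxv : x v ∈ L.S v) :
    L.eval (Function.update x s a) = L.eval x := by
  have hx : L.M i x = 0 := L.M_eq_zero_of_mem hv hxv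
  refine L.eval_eq_of_M_eq_zero i ?_ hx fun j hj => L.M_update_of_ne hs (hj.trans_le hi).ne x a
  rcases eq_or_ne i ℓ with rfl | hiℓ
  · exact L.M_eq_zero_of_mem hs (by rwa [Function.update_self])
  · rw [L.M_update_of_ne hs hiℓ, hx]

theorem filter_eval_update_ne_subset_piFinset {ℓ : Fin r} {s : Fin n} {a : F} (hs : s ∈ L.layer ℓ)
    (ha : a ∈ L.S s) :
    univ.filter (fun x => L.eval (Function.update x s a) ≠ L.eval x) ⊆
      Fintype.piFinset fun v => if v ∈ L.layersUpTo ℓ then (L.S v)ᶜ else univ := by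
  intro x hx
  rw [Fintype.mem_piFinset]
  intro v
  split_ifs with hvD
  · obtain ⟨i, hi, hv⟩ := mem_biUnion.mp hvD
    exact mem_compl.mpr fun hxv =>
      (mem_filter.mp hx).2 (L.eval_update_eq_of_mem hs ha (mem_filter.mp hi).2 hv hxv)
  · exact mem_univ _

end LayeredForm

/-- General edge-deletion bound for a variable `s` in the `ℓ`-th layer
whose canalizing input set contains `0`. -/
theorem stmt5 {F : Type*} [Field F] [Fintype F] [DecidableEq F] {n r : ℕ}
    (f : (Fin n → F) → F) (L : LayeredForm F n r) (hf : f = L.eval)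
    (ℓ : Fin r) (s : Fin n) (hs : s ∈ L.layer ℓ) (h0 : (0 : F) ∈ L.S s) :
    chCount f s 0 ≤
      Fintype.card F ^ (n - ∑ i ∈ Finset.univ.filter (fun i : Fin r => i ≤ ℓ), (L.layer i).card) *
        (∏ i ∈ Finset.univ.filter (fun i : Fin r => i < ℓ),
          ∏ v ∈ L.layer i, (Fintype.card F - (L.S v).card)) *
        (∏ v ∈ (L.layer ℓ).erase s, (Fintype.card F - (L.S v).card)) *
        (Fintype.card F - (L.S s).card) := by
  subst hf
  calc chCount L.eval s 0
      ≤ (Fintype.piFinset fun v => if v ∈ L.layersUpTo ℓ then (L.S v)ᶜ else univ).card :=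
        card_le_card (L.filter_eval_update_ne_subset_piFinset hs h0)
    _ = _ := by
      rw [card_piFinset_ite_mem, Fintype.card_fin, L.card_layersUpTo,
        L.prod_layersUpTo _ hs]
      simp only [card_compl, mul_assoc]
end

section
/- Let p = 2, so F is the field with two elements, and let f : F^n → F be in layered canalizing form with r layers of sizes k_1, …, k_r (each canalizing input set is then a singleton). If the variable x_s lies in the ℓ-th layer, then the number of transitions changed by deleting x_s satisfies #{x ∈ F^n : f(x_1, …, x_{s−1}, 0, x_{s+1}, …, x_n) ≠ f(x)} ≤ 2^{n − (k_1 + ⋯ + k_ℓ)}. -/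
open Finset

/-!
If deleting `x_s` (with `s` in layer `ℓ`) changes `f(x)`, then `x_s ≠ 0` and every other variable
`x_v` of the layers `1, …, ℓ` lies outside its canalizing set `S_v`: otherwise some factor
`M_i` with `i ≤ ℓ` vanishes both at `x` and at the updated point, while the earlier factors `M_j`,
`j < i`, do not see `x_s`, so the nested expression takes the same value at both points.
Each of these `d = k₁ + ⋯ + k_ℓ` coordinates therefore avoids a nonempty set, which leaves at most
`(q - 1)^d q^(n - d)` such `x`, where `q = |F|`; for `q = 2` this is `2^(n - d)`.
-/

lemma nestEval_ofFn_eq_of_eq_zero {F : Type*} [MulZeroClass F] [Add F] :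
    ∀ {r : ℕ} (m m' b : Fin r → F) (P P' : F) (i : Fin r),
      m i = 0 → m' i = 0 → (∀ j < i, m j = m' j) →
      nestEval (List.ofFn fun k => (m k, b k)) P = nestEval (List.ofFn fun k => (m' k, b k)) P'
  | 0, _, _, _, _, _, i => i.elim0
  | r + 1, m, m', b, P, P', i => by
    intro hm hm' hlt
    rw [List.ofFn_succ, List.ofFn_succ]
    change m 0 * _ + b 0 = m' 0 * _ + b 0
    induction i using Fin.cases with
    | zero => rw [hm, hm', zero_mul, zero_mul]
    | succ i =>
      rw [hlt 0 (Fin.succ_pos i),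
        nestEval_ofFn_eq_of_eq_zero (fun k => m k.succ) (fun k => m' k.succ) (fun k => b k.succ)
          P P' i hm hm' fun j hj => hlt j.succ (Fin.succ_lt_succ_iff.mpr hj)]

lemma card_le_of_forall_apply_notMem {ι F : Type*} [Fintype ι] [DecidableEq ι] [Fintype F]
    [DecidableEq F] {T : Finset ι} {A : ι → Finset F} (hA : ∀ v ∈ T, (A v).Nonempty)
    {X : Finset (ι → F)} (hX : ∀ x ∈ X, ∀ v ∈ T, x v ∉ A v) :
    #X ≤ (Fintype.card F - 1) ^ #T * Fintype.card F ^ #Tᶜ := by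
  set q := Fintype.card F
  calc #X
      ≤ #(Fintype.piFinset fun v => if v ∈ T then univ \ A v else univ) := by
        refine card_le_card fun x hx => Fintype.mem_piFinset.2 fun v => ?_
        split_ifs with hv
        · exact mem_sdiff.2 ⟨mem_univ _, hX x hx v hv⟩
        · exact mem_univ _
    _ = (∏ v ∈ T, #(univ \ A v)) * ∏ v ∈ Tᶜ, #(univ : Finset F) := by
        rw [Fintype.card_piFinset, ← prod_mul_prod_compl T]
        congr 1
        · exact prod_congr rfl fun v hv => by rw [if_pos hv]
        · exact prod_congr rfl fun v hv => by rw [if_neg (mem_compl.1 hv)]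
    _ ≤ (∏ _v ∈ T, (q - 1)) * ∏ _v ∈ Tᶜ, q := by
        gcongr with v hv
        · have := (hA v hv).card_pos
          rw [card_univ_sdiff]
          omega
        · rfl
    _ = (q - 1) ^ #T * q ^ #Tᶜ := by rw [prod_const, prod_const]

namespace LayeredForm

variable {F : Type*} [Field F] [Fintype F] [DecidableEq F] {n r : ℕ} (L : LayeredForm F n r)

lemma M_eq_zero {i : Fin r} {v : Fin n} (hv : v ∈ L.layer i) {x : Fin n → F}
    (hx : x v ∈ L.S v) : L.M i x = 0 :=
  prod_eq_zero hv (if_pos hx)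

lemma M_update_of_notMem {j : Fin r} {s : Fin n} (hs : s ∉ L.layer j) (x : Fin n → F) (a : F) :
    L.M j (Function.update x s a) = L.M j x :=
  prod_congr rfl fun _ hw => by rw [Function.update_of_ne (ne_of_mem_of_not_mem hw hs)]

lemma eval_update_eq_of_mem_S {ℓ i : Fin r} (hi : i ≤ ℓ) {s v : Fin n} (hs : s ∈ L.layer ℓ)
    (hv : v ∈ L.layer i) (hvs : v ≠ s) {x : Fin n → F} (hx : x v ∈ L.S v) (a : F) :
    L.eval (Function.update x s a) = L.eval x := by
  refine nestEval_ofFn_eq_of_eq_zero _ _ L.B _ _ i (L.M_eq_zero hv ?_) (L.M_eq_zero hv hx)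
    fun j hj => L.M_update_of_notMem (disjoint_right.1 (L.disj j ℓ (hj.trans_le hi).ne) hs) x a
  rwa [Function.update_of_ne hvs]

lemma forall_notMem_of_eval_update_ne {ℓ : Fin r} {s : Fin n} (hs : s ∈ L.layer ℓ) (a : F)
    {x : Fin n → F} (hx : L.eval (Function.update x s a) ≠ L.eval x) :
    ∀ v ∈ (univ.filter (· ≤ ℓ)).biUnion L.layer, x v ∉ if v = s then {a} else L.S v := by
  intro v hv
  obtain ⟨i, hi, hvi⟩ := mem_biUnion.1 hv
  split_ifs with hvs
  · intro hxa
    subst hvs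
    rw [← mem_singleton.1 hxa, Function.update_eq_self] at hx
    exact hx rfl
  · exact fun hxS => hx (L.eval_update_eq_of_mem_S (mem_filter.1 hi).2 hs hvi hvs hxS a)

lemma chCount_le {ℓ : Fin r} {s : Fin n} (hs : s ∈ L.layer ℓ) (a : F) :
    chCount L.eval s a ≤
      (Fintype.card F - 1) ^ (∑ i ∈ univ.filter (· ≤ ℓ), #(L.layer i)) *
        Fintype.card F ^ (n - ∑ i ∈ univ.filter (· ≤ ℓ), #(L.layer i)) := by
  set T := (univ.filter (· ≤ ℓ)).biUnion L.layer
  have hT : #T = ∑ i ∈ univ.filter (· ≤ ℓ), #(L.layer i) :=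
    card_biUnion fun i _ j _ hij => L.disj i j hij
  have hA : ∀ v ∈ T, (if v = s then {a} else L.S v).Nonempty := by
    intro v hv
    obtain ⟨i, -, hvi⟩ := mem_biUnion.1 hv
    split_ifs
    · exact singleton_nonempty a
    · exact L.Sne i v hvi
  rw [← hT]
  refine (card_le_of_forall_apply_notMem hA fun x hx =>
    L.forall_notMem_of_eval_update_ne hs a (mem_filter.1 hx).2).trans_eq ?_
  rw [card_compl, Fintype.card_fin]

end LayeredForm

/-- In the Boolean case `p = 2`, the edge-deletion bound for a variable `s`
in the `ℓ`-th layer reduces to `2 ^ (n - (k₁ + ⋯ + k_ℓ))`. -/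
theorem stmt7 {F : Type*} [Field F] [Fintype F] [DecidableEq F] (hp : Fintype.card F = 2)
    {n r : ℕ} (f : (Fin n → F) → F) (L : LayeredForm F n r) (hf : f = L.eval)
    (ℓ : Fin r) (s : Fin n) (hs : s ∈ L.layer ℓ) :
    chCount f s 0 ≤
      2 ^ (n - ∑ i ∈ Finset.univ.filter (fun i : Fin r => i ≤ ℓ), (L.layer i).card) := by
  subst hf
  simpa [hp] using L.chCount_le hs 0
end
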